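/- arXiv:math/0607119 — 4 statements merged into one kernel-verified Lean document; each statement's English description precedes it below -/
import Mathlib

section
/- Almost-sure interpolation lemma: let (W_n) be a sequence of real random variables and (w_n) a sequence of positive reals such that |W_{n+1} - W_n| ≤ 1 and |w_{n+1} - w_n| ≤ 1 deterministically, w_n = Θ(n/√(log n)), and W_{n_ℓ}/w_{n_ℓ} → 1 almost surely along n_ℓ := ⌊e^{√ℓ}⌋. Then W_n/w_n → 1 almost surely along the full sequence. -/
open MeasureTheory Filter

noncomputable def Nsub (ℓ : ℕ) : ℕ := ⌊Real.exp (Real.sqrt ℓ)⌋₊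

lemma Nsub_mono : Monotone Nsub := fun a b hab =>
  Nat.floor_le_floor (Real.exp_le_exp.mpr (Real.sqrt_le_sqrt (by exact_mod_cast hab)))

lemma sqrt_tendsto : Tendsto Real.sqrt atTop atTop := by
  apply tendsto_atTop_atTop_of_monotone (fun a b h => Real.sqrt_le_sqrt h)
  intro b
  exact ⟨(max b 0)^2, by rw [Real.sqrt_sq (le_max_right b 0)]; exact le_max_left b 0⟩

lemma Nsub_tendsto : Tendsto Nsub atTop atTop :=
  tendsto_nat_floor_atTop.comp
    (Real.tendsto_exp_atTop.comp (sqrt_tendsto.comp tendsto_natCast_atTop_atTop))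

-- pointwise bound for ℓ with √ℓ ≥ 4 and Nsub ℓ ≥ 2
lemma gap_bound (w : ℕ → ℝ) (c C : ℝ) (hc : 0 < c)
    (hgrowth : ∀ n : ℕ, 2 ≤ n →
      c * n / Real.sqrt (max (Real.log n) 1) ≤ w n ∧
      w n ≤ C * n / Real.sqrt (max (Real.log n) 1))
    (ℓ : ℕ) (hℓ : (4:ℝ) ≤ Real.sqrt ℓ) (hN2 : 2 ≤ Nsub ℓ) :
    0 < w (Nsub ℓ) ∧
    ((Nsub (ℓ+1) : ℝ) - Nsub ℓ) / w (Nsub ℓ) ≤ (4 / c) / Real.sqrt (Real.sqrt ℓ) := by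
  set t := Real.sqrt ℓ with ht
  have ht0 : 0 < t := by linarith
  have hts : Real.sqrt t * Real.sqrt t = t := Real.mul_self_sqrt ht0.le
  have hst0 : 0 < Real.sqrt t := Real.sqrt_pos.mpr ht0
  have het : 0 < Real.exp t := Real.exp_pos t
  -- t^2 = ℓ
  have htsq : t * t = (ℓ : ℝ) := Real.mul_self_sqrt (Nat.cast_nonneg ℓ)
  -- upper bound for sqrt(ℓ+1)
  have hx : (0:ℝ) ≤ 1 / (2 * t) := by positivity
  have hsq1 : Real.sqrt ((ℓ : ℕ) + 1 : ℕ) ≤ t + 1 / (2 * t) := by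
    have h1 : ((((ℓ : ℕ) + 1 : ℕ)) : ℝ) ≤ (t + 1 / (2 * t)) ^ 2 := by
      push_cast
      have : (t + 1 / (2 * t)) ^ 2 = t * t + 1 + (1 / (2 * t)) ^ 2 := by
        field_simp; ring
      rw [this, htsq]
      have h0 : (0:ℝ) ≤ (1 / (2 * t)) ^ 2 := by positivity
      linarith
    calc Real.sqrt (((ℓ : ℕ) + 1 : ℕ)) ≤ Real.sqrt ((t + 1 / (2 * t)) ^ 2) :=
          Real.sqrt_le_sqrt h1
      _ = t + 1 / (2 * t) := Real.sqrt_sq (by positivity)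
  -- exp(1/(2t)) ≤ 2
  have hexphalf : Real.exp (1 / (2 * t)) ≤ 2 := by
    have h1 : Real.exp (1 / (2 * t)) ≤ Real.exp (1 / 2) := by
      apply Real.exp_le_exp.mpr
      rw [div_le_div_iff₀ (by positivity) (by norm_num)]
      linarith
    have h2 : Real.exp (1 / 2) * Real.exp (1 / 2) = Real.exp 1 := by
      rw [← Real.exp_add]; norm_num
    have h3 := Real.exp_one_lt_d9
    have h4 := Real.exp_pos (1 / 2)
    nlinarith
  -- exp x - 1 ≤ x exp x
  have hexpm1 : Real.exp (1 / (2 * t)) - 1 ≤ (1 / (2 * t)) * Real.exp (1 / (2 * t)) := by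
    have h1 := Real.add_one_le_exp (-(1 / (2 * t)))
    have h2 : Real.exp (-(1 / (2 * t))) = (Real.exp (1 / (2 * t)))⁻¹ := Real.exp_neg _
    have h3 := Real.exp_pos (1 / (2 * t))
    rw [h2] at h1
    have h4 : (-(1 / (2 * t)) + 1) * Real.exp (1 / (2 * t)) ≤ 1 := by
      have h5 := mul_le_mul_of_nonneg_right h1 h3.le
      rw [inv_mul_cancel₀ h3.ne'] at h5
      exact h5
    nlinarith
  -- gap upper bound
  have hgapub : (Nsub (ℓ+1) : ℝ) - Nsub ℓ ≤ 2 * Real.exp t / t := by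
    have h1 : (Nsub (ℓ+1) : ℝ) ≤ Real.exp (Real.sqrt ((ℓ:ℕ) + 1 : ℕ)) := by
      apply Nat.floor_le (Real.exp_pos _).le
    have h2 : Real.exp t - 1 ≤ (Nsub ℓ : ℝ) := by
      have := Nat.lt_floor_add_one (Real.exp t)
      simp only [Nsub]
      push_cast at this ⊢
      linarith
    have h3 : Real.exp (Real.sqrt ((ℓ:ℕ) + 1 : ℕ)) ≤ Real.exp t * Real.exp (1 / (2 * t)) := by
      rw [← Real.exp_add]
      exact Real.exp_le_exp.mpr hsq1
    have h5 : Real.exp t * (Real.exp (1 / (2 * t)) - 1) ≤ Real.exp t / t := by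
      calc Real.exp t * (Real.exp (1 / (2 * t)) - 1)
          ≤ Real.exp t * ((1 / (2 * t)) * 2) := by
            apply mul_le_mul_of_nonneg_left _ het.le
            calc Real.exp (1 / (2 * t)) - 1 ≤ (1 / (2 * t)) * Real.exp (1 / (2 * t)) := hexpm1
              _ ≤ (1 / (2 * t)) * 2 := mul_le_mul_of_nonneg_left hexphalf hx
        _ = Real.exp t / t := by field_simp
    have h6 : (1:ℝ) ≤ Real.exp t / t := by
      rw [le_div_iff₀ ht0]
      have := Real.add_one_le_exp t
      linarith
    calc (Nsub (ℓ+1) : ℝ) - Nsub ℓ ≤ Real.exp t * Real.exp (1 / (2 * t)) - (Real.exp t - 1) := by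
          linarith [h1.trans h3]
      _ = Real.exp t * (Real.exp (1 / (2 * t)) - 1) + 1 := by ring
      _ ≤ Real.exp t / t + Real.exp t / t := by linarith
      _ = 2 * Real.exp t / t := by ring
  -- lower bound on w (Nsub ℓ)
  have hNle : (Nsub ℓ : ℝ) ≤ Real.exp t := Nat.floor_le (Real.exp_pos _).le
  have hNge : Real.exp t / 2 ≤ (Nsub ℓ : ℝ) := by
    have h2 : Real.exp t - 1 ≤ (Nsub ℓ : ℝ) := by
      have := Nat.lt_floor_add_one (Real.exp t)
      simp only [Nsub]; push_cast at this ⊢; linarith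
    have : (2:ℝ) ≤ Real.exp t := by
      have := Real.add_one_le_exp t; linarith
    linarith
  have hN0 : (0:ℝ) < (Nsub ℓ : ℝ) := by positivity
  have hlogle : Real.sqrt (max (Real.log (Nsub ℓ)) 1) ≤ Real.sqrt t := by
    apply Real.sqrt_le_sqrt
    apply max_le _ (by linarith)
    calc Real.log (Nsub ℓ) ≤ Real.log (Real.exp t) := Real.log_le_log hN0 hNle
      _ = t := Real.log_exp t
  have hden0 : 0 < Real.sqrt (max (Real.log (Nsub ℓ)) 1) := by
    apply Real.sqrt_pos.mpr
    exact lt_of_lt_of_le one_pos (le_max_right _ _)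
  have hwlb : c * Real.exp t / (2 * Real.sqrt t) ≤ w (Nsub ℓ) := by
    have h1 := (hgrowth (Nsub ℓ) hN2).1
    calc c * Real.exp t / (2 * Real.sqrt t) = (c * (Real.exp t / 2)) / Real.sqrt t := by ring
      _ ≤ (c * Nsub ℓ) / Real.sqrt (max (Real.log (Nsub ℓ)) 1) := by
          apply div_le_div₀ (by positivity) _ hden0 hlogle
          exact mul_le_mul_of_nonneg_left hNge hc.le
      _ ≤ w (Nsub ℓ) := h1
  have hwpos : 0 < w (Nsub ℓ) := lt_of_lt_of_le (by positivity) hwlb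
  refine ⟨hwpos, ?_⟩
  calc ((Nsub (ℓ+1) : ℝ) - Nsub ℓ) / w (Nsub ℓ)
      ≤ (2 * Real.exp t / t) / (c * Real.exp t / (2 * Real.sqrt t)) := by
        apply div_le_div₀ (by positivity) hgapub (by positivity) hwlb
    _ = (4 / c) / Real.sqrt t := by
        field_simp
        linear_combination 4 * hts

lemma hyp_eventually : ∀ᶠ ℓ : ℕ in atTop, (4:ℝ) ≤ Real.sqrt ℓ ∧ 2 ≤ Nsub ℓ := by
  filter_upwards [eventually_ge_atTop 16, Nsub_tendsto.eventually_ge_atTop 2] with ℓ h16 h2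
  refine ⟨?_, h2⟩
  have h : (16:ℝ) ≤ (ℓ:ℝ) := by exact_mod_cast h16
  calc (4:ℝ) = Real.sqrt 16 := by
        rw [show (16:ℝ) = 4 ^ 2 by norm_num, Real.sqrt_sq (by norm_num : (0:ℝ) ≤ 4)]
    _ ≤ Real.sqrt ℓ := Real.sqrt_le_sqrt h

lemma gap_tendsto (w : ℕ → ℝ) (c C : ℝ) (hc : 0 < c)
    (hgrowth : ∀ n : ℕ, 2 ≤ n →
      c * n / Real.sqrt (max (Real.log n) 1) ≤ w n ∧
      w n ≤ C * n / Real.sqrt (max (Real.log n) 1)) :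
    Tendsto (fun ℓ : ℕ => ((Nsub (ℓ+1) : ℝ) - Nsub ℓ) / w (Nsub ℓ)) atTop (nhds 0) := by
  have hub : Tendsto (fun ℓ : ℕ => (4 / c) / Real.sqrt (Real.sqrt ℓ)) atTop (nhds 0) :=
    Tendsto.div_atTop tendsto_const_nhds
      ((sqrt_tendsto.comp sqrt_tendsto).comp tendsto_natCast_atTop_atTop)
  apply tendsto_of_tendsto_of_tendsto_of_le_of_le' tendsto_const_nhds hub
  · filter_upwards [hyp_eventually] with ℓ hh
    have h := gap_bound w c C hc hgrowth ℓ hh.1 hh.2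
    apply div_nonneg _ h.1.le
    have h2 := Nsub_mono (Nat.le_succ ℓ)
    simp only [sub_nonneg]
    exact_mod_cast h2
  · filter_upwards [hyp_eventually] with ℓ hh
    exact (gap_bound w c C hc hgrowth ℓ hh.1 hh.2).2

lemma tele (f : ℕ → ℝ) (h : ∀ n, |f (n + 1) - f n| ≤ 1) (m : ℕ) :
    ∀ n, m ≤ n → |f n - f m| ≤ (n : ℝ) - m := by
  intro n hn
  induction n, hn using Nat.le_induction with
  | base => simp
  | succ n hn ih =>
    have h1 := h n
    have h2 := abs_sub_le (f (n + 1)) (f n) (f m)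
    push_cast
    linarith

noncomputable def idx (n : ℕ) : ℕ :=
  Nat.findGreatest (fun ℓ => Nsub ℓ ≤ n) (n ^ 2)

lemma Nsub_zero : Nsub 0 = 1 := by simp [Nsub]

lemma idx_spec (n : ℕ) (hn : 1 ≤ n) : Nsub (idx n) ≤ n := by
  unfold idx
  exact Nat.findGreatest_spec (P := fun ℓ => Nsub ℓ ≤ n) (m := 0) (Nat.zero_le _)
    (by show Nsub 0 ≤ n; rw [Nsub_zero]; exact hn)

lemma idx_lt (n : ℕ) (hn : 1 ≤ n) : n < Nsub (idx n + 1) := by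
  have hP2 : ¬ (Nsub (n ^ 2) ≤ n) := by
    simp only [Nsub, not_le]
    have h2 : Real.sqrt ((n ^ 2 : ℕ) : ℝ) = (n : ℝ) := by
      push_cast; exact Real.sqrt_sq (Nat.cast_nonneg n)
    rw [h2]
    have h1 := Real.add_one_le_exp (n : ℝ)
    have h3 : (n + 1 : ℕ) ≤ ⌊Real.exp (n : ℝ)⌋₊ := Nat.le_floor (by push_cast; linarith)
    omega
  have hle : idx n ≤ n ^ 2 := Nat.findGreatest_le _
  have hne : idx n ≠ n ^ 2 := fun h => hP2 (h ▸ idx_spec n hn)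
  have hlt : idx n + 1 ≤ n ^ 2 := by omega
  by_contra h
  push_neg at h
  unfold idx at h hlt
  exact Nat.findGreatest_is_greatest (Nat.lt_succ_self _) hlt h

lemma idx_tendsto : Tendsto idx atTop atTop := by
  rw [tendsto_atTop_atTop]
  intro b
  refine ⟨max (Nsub b) (max b 1), fun n hn => ?_⟩
  have h1 : Nsub b ≤ n := le_trans (le_max_left _ _) hn
  have hb : b ≤ n := le_trans (le_trans (le_max_left _ _) (le_max_right _ _)) hn
  have hbn : b ≤ n ^ 2 := le_trans hb (Nat.le_self_pow two_ne_zero n)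
  unfold idx
  exact Nat.le_findGreatest hbn h1

/-- Almost-sure interpolation lemma: if `|W_{n+1} - W_n| ≤ 1` and `|w_{n+1} - w_n| ≤ 1`
deterministically, `w_n = Θ(n/√(log n))`, and `W_{n_ℓ}/w_{n_ℓ} → 1` a.s. along the
subsequence `n_ℓ = ⌊e^{√ℓ}⌋`, then `W_n/w_n → 1` a.s. along the full sequence. -/
theorem as_interpolation {Ω : Type*} [MeasurableSpace Ω] (μ : Measure Ω)
    [IsProbabilityMeasure μ] (W : ℕ → Ω → ℝ) (w : ℕ → ℝ)
    (hW : ∀ n ω, |W (n + 1) ω - W n ω| ≤ 1)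
    (hw : ∀ n, |w (n + 1) - w n| ≤ 1)
    (c C : ℝ) (hc : 0 < c)
    (hgrowth : ∀ n : ℕ, 2 ≤ n →
      c * n / Real.sqrt (max (Real.log n) 1) ≤ w n ∧
      w n ≤ C * n / Real.sqrt (max (Real.log n) 1))
    (hsub : ∀ᵐ ω ∂μ, Tendsto
      (fun ℓ : ℕ => W ⌊Real.exp (Real.sqrt ℓ)⌋₊ ω / w ⌊Real.exp (Real.sqrt ℓ)⌋₊)
      atTop (nhds 1)) :
    ∀ᵐ ω ∂μ, Tendsto (fun n : ℕ => W n ω / w n) atTop (nhds 1) := by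
  have gap := gap_tendsto w c C hc hgrowth
  rw [Metric.tendsto_atTop] at gap
  filter_upwards [hsub] with ω hω
  have hω' : Tendsto (fun ℓ : ℕ => W (Nsub ℓ) ω / w (Nsub ℓ)) atTop (nhds 1) := hω
  rw [Metric.tendsto_atTop] at hω' ⊢
  intro ε hε
  set δ : ℝ := min (ε / 8) (1 / 2) with hδdef
  have hδpos : 0 < δ := lt_min (by positivity) (by norm_num)
  have hδε : δ ≤ ε / 8 := min_le_left _ _
  have hδhalf : δ ≤ 1 / 2 := min_le_right _ _
  obtain ⟨L₁, hL₁⟩ := hω' δ hδpos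
  obtain ⟨L₂, hL₂⟩ := gap δ hδpos
  obtain ⟨L₃, hL₃⟩ := eventually_atTop.mp hyp_eventually
  set L := max (max L₁ L₂) L₃ with hLdef
  obtain ⟨M₀, hM₀⟩ := tendsto_atTop_atTop.mp idx_tendsto L
  refine ⟨max M₀ 1, fun n hn => ?_⟩
  have hn1 : 1 ≤ n := le_trans (le_max_right _ _) hn
  have hℓL : L ≤ idx n := hM₀ n (le_trans (le_max_left _ _) hn)
  set ℓ := idx n with hℓdef
  have hk : Nsub ℓ ≤ n := idx_spec n hn1
  have hk' : n < Nsub (ℓ + 1) := idx_lt n hn1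
  have hhyp := hL₃ ℓ (le_trans (le_max_right _ _) hℓL)
  have hb : 0 < w (Nsub ℓ) := (gap_bound w c C hc hgrowth ℓ hhyp.1 hhyp.2).1
  set a := W (Nsub ℓ) ω with hadef
  set b := w (Nsub ℓ) with hbdef
  set g : ℝ := (Nsub (ℓ + 1) : ℝ) - Nsub ℓ with hgdef
  have hg0 : 0 ≤ g := by
    have := Nsub_mono (Nat.le_succ ℓ)
    simp only [hgdef, sub_nonneg]
    exact_mod_cast this
  have hgδ : g < δ * b := by
    have h1 := hL₂ ℓ (le_trans (le_trans (le_max_right _ _) (le_max_left _ _)) hℓL)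
    rw [Real.dist_eq, sub_zero] at h1
    have h2 : g / b < δ := lt_of_le_of_lt (le_abs_self _) h1
    exact (div_lt_iff₀ hb).mp h2
  have hab : |a - b| ≤ δ * b := by
    have hd := hL₁ ℓ (le_trans (le_trans (le_max_left _ _) (le_max_left _ _)) hℓL)
    rw [Real.dist_eq] at hd
    have h1 : |a - b| = |a / b - 1| * b := by
      rw [div_sub_one hb.ne', abs_div, abs_of_pos hb, div_mul_cancel₀ _ hb.ne']
    rw [h1]
    exact mul_le_mul_of_nonneg_right hd.le hb.le
  have hnk' : (n : ℝ) ≤ (Nsub (ℓ + 1) : ℝ) := by exact_mod_cast hk'.le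
  have hkcast : (Nsub ℓ : ℝ) ≤ (n : ℝ) := by exact_mod_cast hk
  have hxa : |W n ω - a| ≤ g := by
    have h1 := tele (fun m => W m ω) (fun m => hW m ω) (Nsub ℓ) n hk
    simp only [hgdef]
    calc |W n ω - a| ≤ (n : ℝ) - Nsub ℓ := h1
      _ ≤ (Nsub (ℓ + 1) : ℝ) - Nsub ℓ := by linarith
  have hyb : |w n - b| ≤ g := by
    have h1 := tele w hw (Nsub ℓ) n hk
    simp only [hgdef]
    calc |w n - b| ≤ (n : ℝ) - Nsub ℓ := h1
      _ ≤ (Nsub (ℓ + 1) : ℝ) - Nsub ℓ := by linarith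
  have hybl : b - g ≤ w n := by
    have := (abs_le.mp hyb).1
    linarith
  have hδb : δ * b ≤ (1 / 2) * b := mul_le_mul_of_nonneg_right hδhalf hb.le
  have hy : 0 < w n := by linarith
  have hxy : |W n ω - w n| ≤ 2 * g + δ * b := by
    have h1 := abs_sub_le (W n ω) a (w n)
    have h2 := abs_sub_le a b (w n)
    have h3 : |b - w n| = |w n - b| := abs_sub_comm _ _
    linarith
  have key : |W n ω - w n| < ε * w n := by
    have p1 : δ * b ≤ ε / 8 * b := mul_le_mul_of_nonneg_right hδε hb.le
    have p2 : ε * (b - g) ≤ ε * w n := mul_le_mul_of_nonneg_left hybl hε.le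
    have p3 : ε * g ≤ ε * (δ * b) := mul_le_mul_of_nonneg_left hgδ.le hε.le
    have p4 : ε * (δ * b) ≤ ε * (1 / 2 * b) := mul_le_mul_of_nonneg_left hδb hε.le
    have p5 : 0 < ε * b := mul_pos hε hb
    nlinarith
  rw [Real.dist_eq, div_sub_one hy.ne', abs_div, abs_of_pos hy]
  exact (div_lt_iff₀ hy).mpr key
end

section
/- For generalized m-ary search trees, with f as above, the variance constant σ² := f'(1) + f''(1) equals (H^{(2)}_{m(t+1)} - H^{(2)}_{t+1})/(H_{m(t+1)} - H_{t+1})³, where H^{(2)}_j = ∑_{i=1}^{j} 1/i². -/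
open Finset

/-- The harmonic number `H_n = ∑_{i=1}^n 1/i` (as a real number). -/
noncomputable def harmonicR (n : ℕ) : ℝ := ∑ i ∈ Finset.Icc 1 n, (1 / i : ℝ)

/-- The second-order harmonic number `H^{(2)}_n = ∑_{i=1}^n 1/i²`. -/
noncomputable def harmonicR2 (n : ℕ) : ℝ := ∑ i ∈ Finset.Icc 1 n, (1 / (i : ℝ) ^ 2)

open Polynomial

namespace VarAux

lemma sum_sum_erase (s : Finset ℕ) (x : ℕ → ℝ) :
    ∑ i ∈ s, ∑ k ∈ s.erase i, x i * x k = (∑ i ∈ s, x i)^2 - ∑ i ∈ s, (x i)^2 := by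
  classical
  have key : ∀ i ∈ s, x i * ∑ k ∈ s, x k = (x i)^2 + ∑ k ∈ s.erase i, x i * x k := by
    intro i hi
    rw [Finset.mul_sum, ← Finset.add_sum_erase _ (fun k => x i * x k) hi, sq]
  have h1 : (∑ i ∈ s, x i)^2 = ∑ i ∈ s, ((x i)^2 + ∑ k ∈ s.erase i, x i * x k) := by
    rw [sq, Finset.sum_mul]
    exact Finset.sum_congr rfl key
  rw [h1, Finset.sum_add_distrib]
  ring

noncomputable def P (s : Finset ℕ) : Polynomial ℝ := ∏ j ∈ s, (X + C (j:ℝ))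

lemma eval_P (s : Finset ℕ) (x : ℝ) : (P s).eval x = ∏ j ∈ s, (x + j) := by
  simp [P, eval_prod]

lemma deriv_P (s : Finset ℕ) : (P s).derivative = ∑ i ∈ s, P (s.erase i) := by
  classical
  induction s using Finset.induction_on with
  | empty => simp [P]
  | insert _ _ ha ih =>
    rename_i a s
    rw [P, Finset.prod_insert ha, ← P, derivative_mul, ih, Finset.sum_insert ha,
      Finset.erase_insert ha]
    have hrw : ∀ i ∈ s, P ((insert a s).erase i) = (X + C (a:ℝ)) * P (s.erase i) := by
      intro i hi
      have hne : i ≠ a := fun h => ha (h ▸ hi)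
      rw [Finset.erase_insert_of_ne hne.symm, P, Finset.prod_insert (fun h => ha (Finset.mem_of_mem_erase h)), ← P]
    rw [Finset.sum_congr rfl hrw, ← Finset.mul_sum]
    simp [mul_comm]

lemma eval1_erase (s : Finset ℕ) (hs : ∀ j ∈ s, (1:ℝ) + j ≠ 0) {i : ℕ} (hi : i ∈ s) :
    (P (s.erase i)).eval 1 = (P s).eval 1 / (1 + i) := by
  rw [eval_P, eval_P, eq_div_iff (hs i hi)]
  exact Finset.prod_erase_mul s _ hi

lemma eval1_deriv (s : Finset ℕ) (hs : ∀ j ∈ s, (1:ℝ) + j ≠ 0) :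
    (P s).derivative.eval 1 = (P s).eval 1 * ∑ i ∈ s, 1 / (1 + (i:ℝ)) := by
  rw [deriv_P, eval_finset_sum, Finset.mul_sum]
  refine Finset.sum_congr rfl fun i hi => ?_
  rw [eval1_erase s hs hi]
  field_simp

lemma eval1_deriv2 (s : Finset ℕ) (hs : ∀ j ∈ s, (1:ℝ) + j ≠ 0) :
    (P s).derivative.derivative.eval 1 =
      (P s).eval 1 * ((∑ i ∈ s, 1 / (1 + (i:ℝ)))^2 - ∑ i ∈ s, (1 / (1 + (i:ℝ)))^2) := by
  classical
  rw [deriv_P]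
  rw [derivative_sum]
  rw [eval_finset_sum]
  have step : ∀ i ∈ s, ((P (s.erase i)).derivative).eval 1 =
      ∑ k ∈ s.erase i, (P s).eval 1 * ((1/(1+(i:ℝ))) * (1/(1+(k:ℝ)))) := by
    intro i hi
    rw [deriv_P, eval_finset_sum]
    refine Finset.sum_congr rfl fun k hk => ?_
    have hk' : k ∈ s := Finset.mem_of_mem_erase hk
    have h1 : (P ((s.erase i).erase k)).eval 1 = (P (s.erase i)).eval 1 / (1 + k) := by
      refine eval1_erase _ (fun j hj => hs j (Finset.mem_of_mem_erase hj)) hk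
    rw [h1, eval1_erase s hs hi]
    field_simp
  have pull : ∑ i ∈ s, ∑ k ∈ s.erase i, (P s).eval 1 * (1/(1+(i:ℝ)) * (1/(1+(k:ℝ)))) =
      (P s).eval 1 * ∑ i ∈ s, ∑ k ∈ s.erase i, (1/(1+(i:ℝ)) * (1/(1+(k:ℝ)))) := by
    rw [Finset.mul_sum]
    exact Finset.sum_congr rfl fun i _ => (Finset.mul_sum _ _ _).symm
  rw [Finset.sum_congr rfl step, pull]
  have h2 := sum_sum_erase s (fun i => 1/(1+(i:ℝ)))
  rw [h2]

end VarAux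

namespace VarAux

lemma sum_shift (g : ℕ → ℝ) (N M : ℕ) (h : N < M) :
    ∑ j ∈ Finset.Icc N (M-1), g (j+1) = ∑ i ∈ Finset.Ioc N M, g i := by
  have hm : Finset.Icc (N+1) M = (Finset.Icc N (M-1)).map (addRightEmbedding 1) := by
    rw [Finset.map_add_right_Icc, Nat.sub_add_cancel (by omega)]
  rw [← Finset.Icc_add_one_left_eq_Ioc, hm, Finset.sum_map]
  rfl

lemma prod_shift (g : ℕ → ℝ) (N M : ℕ) (h : N < M) :
    ∏ j ∈ Finset.Icc N (M-1), g (j+1) = ∏ i ∈ Finset.Ioc N M, g i := by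
  have hm : Finset.Icc (N+1) M = (Finset.Icc N (M-1)).map (addRightEmbedding 1) := by
    rw [Finset.map_add_right_Icc, Nat.sub_add_cancel (by omega)]
  rw [← Finset.Icc_add_one_left_eq_Ioc, hm, Finset.prod_map]
  rfl

lemma fact_prod (N M : ℕ) (h : N ≤ M) :
    (N.factorial : ℝ) * ∏ i ∈ Finset.Ioc N M, (i:ℝ) = M.factorial := by
  have h1 : ∀ n : ℕ, ∏ i ∈ Finset.Ioc 0 n, i = n.factorial := by
    intro n
    rw [← Finset.Icc_add_one_left_eq_Ioc]
    induction n with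
    | zero => simp
    | succ k ih => rw [Finset.prod_Icc_succ_top (by omega), ih, Nat.factorial_succ, mul_comm]
  have := Finset.prod_Ioc_consecutive (fun i => i) (Nat.zero_le N) h
  have hN : (N.factorial) * ∏ i ∈ Finset.Ioc N M, i = M.factorial := by
    rw [← h1 N, ← h1 M]; exact this
  calc (N.factorial : ℝ) * ∏ i ∈ Finset.Ioc N M, (i:ℝ)
      = ((N.factorial * ∏ i ∈ Finset.Ioc N M, i : ℕ) : ℝ) := by push_cast; ring
    _ = M.factorial := by rw [hN]

end VarAux


namespace VarAux

lemma Icc_one (n : ℕ) : Finset.Icc 1 n = Finset.Ioc 0 n := Finset.Icc_add_one_left_eq_Ioc 0 n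

lemma harm_diff (N M : ℕ) (h : N ≤ M) :
    harmonicR M - harmonicR N = ∑ i ∈ Finset.Ioc N M, (1 / (i:ℝ)) := by
  unfold harmonicR
  rw [Icc_one, Icc_one, ← Finset.sum_Ioc_consecutive (fun i => (1/(i:ℝ))) (Nat.zero_le N) h]
  ring

lemma harm2_diff (N M : ℕ) (h : N ≤ M) :
    harmonicR2 M - harmonicR2 N = ∑ i ∈ Finset.Ioc N M, (1 / (i:ℝ)^2) := by
  unfold harmonicR2
  rw [Icc_one, Icc_one, ← Finset.sum_Ioc_consecutive (fun i => (1/(i:ℝ)^2)) (Nat.zero_le N) h]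
  ring

end VarAux


open VarAux

/-- For generalized `m`-ary search trees: with `f` as in the defining equation
`(f(u)+t+1) ⋯ (f(u)+m(t+1)-1) = ((m(t+1))!/(t+1)!)·u` near `u = 1`, `f(1) = 1`,
the variance constant `σ² = f'(1) + f''(1)` equals
`(H^{(2)}_{m(t+1)} - H^{(2)}_{t+1})/(H_{m(t+1)} - H_{t+1})³`. -/
theorem variance_constant (m t : ℕ) (hm : 2 ≤ m) (f : ℝ → ℝ)
    (hf1 : f 1 = 1)
    (hdiff : ContDiffAt ℝ 2 f 1)
    (heq : ∀ᶠ u in nhds (1 : ℝ),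
      ∏ j ∈ Finset.Icc (t + 1) (m * (t + 1) - 1), (f u + j) =
        ((m * (t + 1)).factorial / (t + 1).factorial : ℝ) * u) :
    deriv f 1 + deriv (deriv f) 1 =
      (harmonicR2 (m * (t + 1)) - harmonicR2 (t + 1)) /
        (harmonicR (m * (t + 1)) - harmonicR (t + 1)) ^ 3 := by
  classical
  set N := t + 1 with hN
  set M := m * (t + 1) with hM
  have hNM : N < M := by
    have := Nat.mul_le_mul_right (t+1) hm
    omega
  set s : Finset ℕ := Finset.Icc N (M - 1) with hsdef
  set Cst : ℝ := (M.factorial / N.factorial : ℝ) with hCst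
  set A : ℝ := harmonicR M - harmonicR N with hAdef
  set B : ℝ := harmonicR2 M - harmonicR2 N with hBdef
  have hs : ∀ j ∈ s, (1:ℝ) + j ≠ 0 := by
    intro j _; positivity
  -- sums
  have hA : ∑ i ∈ s, 1 / (1 + (i:ℝ)) = A := by
    rw [hAdef, harm_diff N M hNM.le, ← sum_shift (fun i => 1/(i:ℝ)) N M hNM]
    exact Finset.sum_congr rfl fun j _ => by push_cast; ring
  have hB : ∑ i ∈ s, (1 / (1 + (i:ℝ)))^2 = B := by
    rw [hBdef, harm2_diff N M hNM.le, ← sum_shift (fun i => 1/(i:ℝ)^2) N M hNM]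
    refine Finset.sum_congr rfl fun j _ => ?_
    have : ((j:ℝ)+1) ≠ 0 := by positivity
    push_cast
    field_simp
    ring
  have hApos : 0 < A := by
    rw [hAdef, harm_diff N M hNM.le]
    refine Finset.sum_pos (fun i hi => ?_) ⟨M, Finset.mem_Ioc.2 ⟨hNM, le_refl M⟩⟩
    have : 0 < i := lt_of_le_of_lt (Nat.zero_le N) (Finset.mem_Ioc.1 hi).1
    positivity
  have hCpos : 0 < Cst := by
    rw [hCst]
    apply div_pos <;> exact_mod_cast Nat.factorial_pos _
  -- product value
  have hW : (P s).eval 1 = Cst := by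
    rw [eval_P]
    have h1 : ∏ j ∈ s, ((1:ℝ) + j) = ∏ i ∈ Finset.Ioc N M, (i:ℝ) := by
      rw [hsdef, ← prod_shift (fun i => (i:ℝ)) N M hNM]
      exact Finset.prod_congr rfl fun j _ => by push_cast; ring
    rw [h1, hCst, eq_div_iff (by exact_mod_cast (Nat.factorial_pos N).ne')]
    linear_combination fact_prod N M hNM.le
  have hC0 : Cst ≠ 0 := hCpos.ne'
  -- analysis setup
  obtain ⟨u, hu, hcd⟩ := hdiff.contDiffOn (le_refl 2) (by simp)
  obtain ⟨U, hUu, hUo, hU1⟩ := mem_nhds_iff.mp hu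
  have hcdU : ContDiffOn ℝ 2 f U := hcd.mono hUu
  have hfd : ∀ x ∈ U, DifferentiableAt ℝ f x := fun x hx =>
    ((hcdU.differentiableOn (by norm_num)).differentiableAt (hUo.mem_nhds hx))
  have hd2 : ContDiffOn ℝ 1 (deriv f) U := hcdU.deriv_of_isOpen hUo (by norm_num)
  have hdf1 : DifferentiableAt ℝ (deriv f) 1 :=
    (hd2.differentiableOn (by norm_num)).differentiableAt (hUo.mem_nhds hU1)
  set F : ℝ → ℝ := fun x => (P s).eval (f x) with hF
  have hFeq : F =ᶠ[nhds (1:ℝ)] fun x => Cst * x := by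
    filter_upwards [heq] with x hx
    show (P s).eval (f x) = Cst * x
    rw [eval_P]; exact hx
  have hFd : ∀ x ∈ U, HasDerivAt F ((P s).derivative.eval (f x) * deriv f x) x := fun x hx =>
    ((P s).hasDerivAt (f x)).comp x ((hfd x hx).hasDerivAt)
  have hderivF : deriv F =ᶠ[nhds (1:ℝ)] fun x => (P s).derivative.eval (f x) * deriv f x := by
    filter_upwards [hUo.mem_nhds hU1] with x hx using (hFd x hx).deriv
  -- first derivative equation
  have hmul : HasDerivAt (fun x : ℝ => Cst * x) Cst 1 := by
    simpa using (hasDerivAt_id (1:ℝ)).const_mul Cst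
  have hdF1 : deriv F 1 = Cst := by
    rw [hFeq.deriv_eq, hmul.deriv]
  have E1 : (P s).derivative.eval 1 * deriv f 1 = Cst := by
    have h := (hFd 1 hU1).deriv
    rw [hf1] at h
    rw [← h]
    exact hdF1
  -- second derivative equation
  have hdF2 : deriv (deriv F) 1 = 0 := by
    have h1 : deriv F =ᶠ[nhds (1:ℝ)] fun _ => Cst := by
      refine hFeq.deriv.trans ?_
      have hev : ∀ x : ℝ, deriv (fun y : ℝ => Cst * y) x = Cst := fun x => by
        simpa using ((hasDerivAt_id x).const_mul Cst).deriv
      exact Filter.Eventually.of_forall hev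
    rw [h1.deriv_eq]
    simp
  have hG : HasDerivAt (fun x => (P s).derivative.eval (f x) * deriv f x)
      ((P s).derivative.derivative.eval (f 1) * deriv f 1 * deriv f 1
        + (P s).derivative.eval (f 1) * deriv (deriv f) 1) 1 :=
    (((P s).derivative.hasDerivAt (f 1)).comp 1 ((hfd 1 hU1).hasDerivAt)).mul hdf1.hasDerivAt
  have E2 : (P s).derivative.derivative.eval 1 * deriv f 1 * deriv f 1
      + (P s).derivative.eval 1 * deriv (deriv f) 1 = 0 := by
    have h := hG.deriv
    rw [hf1] at h
    rw [← h, ← hderivF.deriv_eq]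
    exact hdF2
  -- substitute values
  rw [eval1_deriv s hs, hW, hA] at E1 E2
  rw [eval1_deriv2 s hs, hW, hA, hB] at E2
  -- E1 : Cst * A * deriv f 1 = Cst
  -- E2 : Cst * (A^2 - B) * (deriv f 1)^2 + Cst * A * deriv (deriv f) 1 = 0
  have E1' : A * deriv f 1 = 1 := by
    have h : Cst * (A * deriv f 1) = Cst * 1 := by rw [mul_one]; linear_combination E1
    exact mul_left_cancel₀ hC0 h
  have E2' : (A^2 - B) * deriv f 1 * deriv f 1 + A * deriv (deriv f) 1 = 0 := by
    have h : Cst * ((A^2 - B) * deriv f 1 * deriv f 1 + A * deriv (deriv f) 1) = Cst * 0 := by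
      rw [mul_zero]; linear_combination E2
    exact mul_left_cancel₀ hC0 h
  rw [eq_div_iff (pow_ne_zero 3 hApos.ne')]
  linear_combination (B * (A * deriv f 1 + 1) - A^3 * deriv f 1) * E1' + A^2 * E2'
end

section
/- For 0 < r ≤ 2 and n ≥ 2, ∫_{-π}^{π} n^{-r(1-cos t)} dt = O((log n)^{-1/2}·r^{-1/2}); in particular, if |F(u)| ≤ A·n^{Re(u)} on the circle |u| = r then (1/2π)|∮_{|u|=r} u^{-k-1} F(u) du| ≤ A'·(log n)^{-1/2} r^{-k} n^r. -/
open Real Complex intervalIntegral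

lemma rpow_neg_half_eq {x : ℝ} (hx : 0 ≤ x) : x ^ (-(1 : ℝ) / 2) = (Real.sqrt x)⁻¹ := by
  rw [show (-(1:ℝ)/2) = -(1/2 : ℝ) by ring, Real.rpow_neg hx, ← Real.sqrt_eq_rpow]

set_option maxHeartbeats 1000000 in
/-- (i) `∫_{-π}^{π} n^{-r(1-cos t)} dt = O((log n)^{-1/2} r^{-1/2})` uniformly for
`0 < r ≤ 2`; (ii) in particular, if `‖F(u)‖ ≤ A n^{Re u}` on the circle `|u| = r`
(with `r` bounded away from `0` and `∞`), then
`(2π)^{-1} ‖∮_{|u|=r} u^{-k-1} F(u) du‖ ≤ C A (log n)^{-1/2} r^{-k} n^r`. -/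
theorem cauchy_saddle_bound :
    ∃ C : ℝ,
      (∀ n : ℕ, 2 ≤ n → ∀ r : ℝ, 0 < r → r ≤ 2 →
        (∫ t in (-Real.pi)..Real.pi, (n : ℝ) ^ (-(r * (1 - Real.cos t))))
          ≤ C * Real.log n ^ (-(1 : ℝ) / 2) * r ^ (-(1 : ℝ) / 2)) ∧
      (∀ n : ℕ, 2 ≤ n → ∀ r : ℝ, 1 / 2 ≤ r → r ≤ 2 → ∀ A : ℝ, ∀ k : ℕ,
        ∀ F : ℂ → ℂ,
        (∀ u : ℂ, ‖u‖ = r → ‖F u‖ ≤ A * (n : ℝ) ^ u.re) →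
        (1 / (2 * Real.pi)) *
            ‖∫ t in (-Real.pi)..Real.pi,
                ((r : ℂ) * Complex.exp (t * Complex.I)) ^ (-(k : ℤ) - 1) *
                  F ((r : ℂ) * Complex.exp (t * Complex.I)) *
                  (Complex.I * (r : ℂ) * Complex.exp (t * Complex.I))‖
          ≤ C * A * Real.log n ^ (-(1 : ℝ) / 2) * r ^ (-(k : ℝ)) * (n : ℝ) ^ r) := by
  have hπ := Real.pi_pos
  set C₁ : ℝ := Real.sqrt (π ^ 3 / 2) with hC₁def
  have hC₁pos : 0 < C₁ := Real.sqrt_pos.2 (by positivity)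
  -- Part (i) with constant C₁
  have main : ∀ n : ℕ, 2 ≤ n → ∀ r : ℝ, 0 < r → r ≤ 2 →
      (∫ t in (-Real.pi)..Real.pi, (n : ℝ) ^ (-(r * (1 - Real.cos t))))
        ≤ C₁ * Real.log n ^ (-(1 : ℝ) / 2) * r ^ (-(1 : ℝ) / 2) := by
    intro n hn r hr hr2
    have hn1 : (1:ℝ) < (n:ℝ) := by exact_mod_cast lt_of_lt_of_le one_lt_two hn
    have hL : 0 < Real.log n := Real.log_pos hn1
    set L := Real.log n with hLdef
    set c : ℝ := 2 * r * L / π ^ 2 with hcdef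
    have hcpos : 0 < c := by positivity
    have hfeq : (fun t : ℝ => (n : ℝ) ^ (-(r * (1 - Real.cos t))))
        = fun t : ℝ => Real.exp (L * (-(r * (1 - Real.cos t)))) := by
      funext t
      rw [Real.rpow_def_of_pos (by positivity)]
    have hcont : Continuous fun t : ℝ => Real.exp (L * (-(r * (1 - Real.cos t)))) :=
      Real.continuous_exp.comp (continuous_const.mul
        ((continuous_const.mul (continuous_const.sub Real.continuous_cos)).neg))
    have hpt : ∀ t ∈ Set.Icc (-Real.pi) Real.pi,
        Real.exp (L * (-(r * (1 - Real.cos t)))) ≤ Real.exp (-c * t ^ 2) := by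
      intro t ht
      apply Real.exp_le_exp.2
      have hcos : Real.cos t ≤ 1 - 2 / π ^ 2 * t ^ 2 :=
        Real.cos_le_one_sub_mul_cos_sq (abs_le.2 ⟨ht.1, ht.2⟩)
      have h1 : 2 / π ^ 2 * t ^ 2 ≤ 1 - Real.cos t := by linarith
      have h2 := mul_le_mul_of_nonneg_left h1 (show (0:ℝ) ≤ r * L by positivity)
      have h3 : r * L * (2 / π ^ 2 * t ^ 2) = c * t ^ 2 := by rw [hcdef]; ring
      linarith
    have hint2 : IntervalIntegrable (fun t : ℝ => Real.exp (-c * t ^ 2)) MeasureTheory.volume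
        (-Real.pi) Real.pi :=
      (Real.continuous_exp.comp (continuous_const.mul (continuous_pow 2))).intervalIntegrable _ _
    have hint1 : IntervalIntegrable (fun t : ℝ => Real.exp (L * (-(r * (1 - Real.cos t)))))
        MeasureTheory.volume (-Real.pi) Real.pi := hcont.intervalIntegrable _ _
    have step1 : (∫ t in (-Real.pi)..Real.pi, Real.exp (L * (-(r * (1 - Real.cos t)))))
        ≤ ∫ t in (-Real.pi)..Real.pi, Real.exp (-c * t ^ 2) :=
      intervalIntegral.integral_mono_on (by linarith) hint1 hint2 hpt
    have step2 : (∫ t in (-Real.pi)..Real.pi, Real.exp (-c * t ^ 2))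
        ≤ ∫ t : ℝ, Real.exp (-c * t ^ 2) := by
      rw [intervalIntegral.integral_of_le (by linarith)]
      exact MeasureTheory.setIntegral_le_integral (integrable_exp_neg_mul_sq hcpos)
        (Filter.Eventually.of_forall fun x => (Real.exp_pos _).le)
    have step3 : (∫ t : ℝ, Real.exp (-c * t ^ 2)) = Real.sqrt (π / c) := integral_gaussian c
    have step4 : Real.sqrt (π / c) = C₁ * L ^ (-(1:ℝ)/2) * r ^ (-(1:ℝ)/2) := by
      rw [rpow_neg_half_eq hL.le, rpow_neg_half_eq hr.le,
        show π / c = (π ^ 3 / 2) / (L * r) by rw [hcdef]; field_simp,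
        Real.sqrt_div (by positivity) _, Real.sqrt_mul hL.le]
      rw [hC₁def]
      field_simp
    rw [hfeq]
    calc (∫ t in (-Real.pi)..Real.pi, Real.exp (L * (-(r * (1 - Real.cos t)))))
        ≤ ∫ t in (-Real.pi)..Real.pi, Real.exp (-c * t ^ 2) := step1
      _ ≤ ∫ t : ℝ, Real.exp (-c * t ^ 2) := step2
      _ = C₁ * L ^ (-(1:ℝ)/2) * r ^ (-(1:ℝ)/2) := by rw [step3, step4]
  refine ⟨2 * C₁, ?_, ?_⟩
  · intro n hn r hr hr2
    have h1 := main n hn r hr hr2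
    have h2 : (0:ℝ) ≤ Real.log n ^ (-(1:ℝ)/2) := Real.rpow_nonneg (Real.log_natCast_nonneg n) _
    have h3 : (0:ℝ) ≤ r ^ (-(1:ℝ)/2) := Real.rpow_nonneg hr.le _
    linarith [mul_nonneg (mul_nonneg hC₁pos.le h2) h3]
  · intro n hn r hr hr2 A k F hF
    have hr0 : 0 < r := lt_of_lt_of_le (by norm_num) hr
    have hn1 : (1:ℝ) < (n:ℝ) := by exact_mod_cast lt_of_lt_of_le one_lt_two hn
    have hn0 : (0:ℝ) < (n:ℝ) := by linarith
    have hL : 0 < Real.log n := Real.log_pos hn1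
    have hA : 0 ≤ A := by
      have h0 := hF (r : ℂ) (by rw [Complex.norm_real, Real.norm_eq_abs, abs_of_pos hr0])
      rw [Complex.ofReal_re] at h0
      have hpos : (0:ℝ) < (n:ℝ) ^ r := Real.rpow_pos_of_pos hn0 r
      nlinarith [norm_nonneg (F (r : ℂ))]
    set g : ℝ → ℂ := fun t =>
      ((r : ℂ) * Complex.exp (t * Complex.I)) ^ (-(k : ℤ) - 1) *
        F ((r : ℂ) * Complex.exp (t * Complex.I)) *
        (Complex.I * (r : ℂ) * Complex.exp (t * Complex.I)) with hgdef
    have hL2 : (0:ℝ) ≤ Real.log n ^ (-(1:ℝ)/2) := Real.rpow_nonneg hL.le _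
    have hrk : (0:ℝ) < r ^ (-(k:ℝ)) := Real.rpow_pos_of_pos hr0 _
    have hnr : (0:ℝ) < (n:ℝ) ^ r := Real.rpow_pos_of_pos hn0 r
    have hRHS : 0 ≤ 2 * C₁ * A * Real.log n ^ (-(1:ℝ)/2) * r ^ (-(k:ℝ)) * (n:ℝ) ^ r := by
      have := hC₁pos.le
      positivity
    by_cases hInt : IntervalIntegrable g MeasureTheory.volume (-Real.pi) Real.pi
    · -- pointwise bound on the norm of the integrand
      have hpt : ∀ t ∈ Set.Icc (-Real.pi) Real.pi,
          ‖g t‖ ≤ A * r ^ (-(k:ℝ)) * (n:ℝ) ^ r * (n:ℝ) ^ (-(r * (1 - Real.cos t))) := by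
        intro t _
        set u : ℂ := (r : ℂ) * Complex.exp (t * Complex.I) with hu
        have habs : ‖u‖ = r := by
          rw [hu, norm_mul, Complex.norm_exp, Complex.norm_real, Real.norm_eq_abs, abs_of_pos hr0]
          simp
        have hre : u.re = r * Real.cos t := by
          rw [hu]
          simp [Complex.mul_re, Complex.exp_ofReal_mul_I_re]
        have hnorm : ‖g t‖ = r ^ (-(k : ℤ) - 1) * ‖F u‖ * r := by
          rw [hgdef]
          simp only [norm_mul, norm_zpow, habs,
            Complex.norm_I, Complex.norm_exp, Complex.norm_real, Real.norm_eq_abs, abs_of_pos hr0]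
          simp [hu]
        rw [hnorm]
        have hFu := hF u habs
        have hz : (0:ℝ) < r ^ (-(k:ℤ) - 1) := zpow_pos hr0 _
        calc r ^ (-(k : ℤ) - 1) * ‖F u‖ * r
            ≤ r ^ (-(k : ℤ) - 1) * (A * (n:ℝ) ^ u.re) * r := by
              have := mul_le_mul_of_nonneg_left hFu hz.le
              nlinarith
          _ = A * r ^ (-(k:ℝ)) * (n:ℝ) ^ r * (n:ℝ) ^ (-(r * (1 - Real.cos t))) := by
              have hsplit : (n:ℝ) ^ (r * Real.cos t)
                  = (n:ℝ) ^ r * (n:ℝ) ^ (-(r * (1 - Real.cos t))) := by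
                rw [← Real.rpow_add hn0]
                congr 1
                ring
              have hzk : r ^ (-(k:ℤ) - 1) * r = r ^ (-(k:ℝ)) := by
                rw [show (-(k:ℝ)) = ((-(k:ℤ) : ℤ) : ℝ) by push_cast; ring,
                  Real.rpow_intCast,
                  show (-(k:ℤ)) = (-(k:ℤ) - 1) + 1 by ring,
                  zpow_add₀ (ne_of_gt hr0)]
                simp
              rw [hre, hsplit, ← hzk]
              ring
      have hbint : IntervalIntegrable
          (fun t => A * r ^ (-(k:ℝ)) * (n:ℝ) ^ r * (n:ℝ) ^ (-(r * (1 - Real.cos t))))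
          MeasureTheory.volume (-Real.pi) Real.pi := by
        have hfeq : (fun t : ℝ => (n : ℝ) ^ (-(r * (1 - Real.cos t))))
            = fun t : ℝ => Real.exp (Real.log n * (-(r * (1 - Real.cos t)))) := by
          funext t
          rw [Real.rpow_def_of_pos hn0]
        have hcont2 : Continuous fun t : ℝ =>
            Real.exp (Real.log n * (-(r * (1 - Real.cos t)))) :=
          Real.continuous_exp.comp (continuous_const.mul
            ((continuous_const.mul (continuous_const.sub Real.continuous_cos)).neg))
        have : IntervalIntegrable (fun t : ℝ => (n : ℝ) ^ (-(r * (1 - Real.cos t))))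
            MeasureTheory.volume (-Real.pi) Real.pi := by
          rw [hfeq]; exact hcont2.intervalIntegrable _ _
        exact this.const_mul _
      have hnormle : ‖∫ t in (-Real.pi)..Real.pi, g t‖
          ≤ ∫ t in (-Real.pi)..Real.pi, ‖g t‖ :=
        intervalIntegral.norm_integral_le_integral_norm (by linarith)
      have hmono : (∫ t in (-Real.pi)..Real.pi, ‖g t‖)
          ≤ ∫ t in (-Real.pi)..Real.pi,
              A * r ^ (-(k:ℝ)) * (n:ℝ) ^ r * (n:ℝ) ^ (-(r * (1 - Real.cos t))) :=
        intervalIntegral.integral_mono_on (by linarith) hInt.norm hbint hpt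
      have hconst : (∫ t in (-Real.pi)..Real.pi,
              A * r ^ (-(k:ℝ)) * (n:ℝ) ^ r * (n:ℝ) ^ (-(r * (1 - Real.cos t))))
          = A * r ^ (-(k:ℝ)) * (n:ℝ) ^ r *
              ∫ t in (-Real.pi)..Real.pi, (n:ℝ) ^ (-(r * (1 - Real.cos t))) :=
        intervalIntegral.integral_const_mul _ _
      have hmain := main n hn r hr0 hr2
      have hintnn : (0:ℝ) ≤ ∫ t in (-Real.pi)..Real.pi, (n:ℝ) ^ (-(r * (1 - Real.cos t))) := by
        apply intervalIntegral.integral_nonneg (by linarith)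
        intro t _
        positivity
      -- r ^ (-(1)/2) ≤ 2 since r ≥ 1/2
      have hr2b : r ^ (-(1:ℝ)/2) ≤ 2 := by
        rw [rpow_neg_half_eq hr0.le]
        have hs : (1/2 : ℝ) ≤ Real.sqrt r := (Real.le_sqrt (by norm_num) hr0.le).2 (by nlinarith)
        have hspos : (0:ℝ) < Real.sqrt r := by linarith
        rw [inv_le_comm₀ hspos (by norm_num)]
        linarith
      have hπle : 1 / (2 * π) ≤ 1 := by
        rw [div_le_one (by linarith)]
        linarith [Real.pi_gt_three]
      have hgr2 : (0:ℝ) ≤ r ^ (-(1:ℝ)/2) := Real.rpow_nonneg hr0.le _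
      calc (1 / (2 * Real.pi)) * ‖∫ t in (-Real.pi)..Real.pi, g t‖
          ≤ (1 / (2 * Real.pi)) *
              (A * r ^ (-(k:ℝ)) * (n:ℝ) ^ r *
                (C₁ * Real.log n ^ (-(1:ℝ)/2) * r ^ (-(1:ℝ)/2))) := by
            have h5 : ‖∫ t in (-Real.pi)..Real.pi, g t‖
                ≤ A * r ^ (-(k:ℝ)) * (n:ℝ) ^ r *
                    (C₁ * Real.log n ^ (-(1:ℝ)/2) * r ^ (-(1:ℝ)/2)) := by
              refine (hnormle.trans (hmono.trans_eq hconst)).trans ?_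
              have hcoef : (0:ℝ) ≤ A * r ^ (-(k:ℝ)) * (n:ℝ) ^ r := by positivity
              exact mul_le_mul_of_nonneg_left hmain hcoef
            have : (0:ℝ) ≤ 1 / (2 * Real.pi) := by positivity
            exact mul_le_mul_of_nonneg_left h5 this
        _ = (1 / (2 * Real.pi) * (C₁ * r ^ (-(1:ℝ)/2))) *
              (A * r ^ (-(k:ℝ)) * (n:ℝ) ^ r * Real.log n ^ (-(1:ℝ)/2)) := by ring
        _ ≤ (2 * C₁) * (A * r ^ (-(k:ℝ)) * (n:ℝ) ^ r * Real.log n ^ (-(1:ℝ)/2)) := by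
            have hkey : 1 / (2 * Real.pi) * (C₁ * r ^ (-(1:ℝ)/2)) ≤ 2 * C₁ := by
              have h6 : C₁ * r ^ (-(1:ℝ)/2) ≤ C₁ * 2 :=
                mul_le_mul_of_nonneg_left hr2b hC₁pos.le
              have h7 : 1 / (2 * Real.pi) * (C₁ * r ^ (-(1:ℝ)/2))
                  ≤ 1 * (C₁ * r ^ (-(1:ℝ)/2)) :=
                mul_le_mul_of_nonneg_right hπle (by positivity)
              nlinarith
            have hnn : (0:ℝ) ≤ A * r ^ (-(k:ℝ)) * (n:ℝ) ^ r * Real.log n ^ (-(1:ℝ)/2) := by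
              positivity
            exact mul_le_mul_of_nonneg_right hkey hnn
        _ = 2 * C₁ * A * Real.log n ^ (-(1:ℝ)/2) * r ^ (-(k:ℝ)) * (n:ℝ) ^ r := by ring
    · rw [intervalIntegral.integral_undef hInt]
      simpa using hRHS
end

section
/- Asymptotic transfer sum for quad trees: for fixed d ≥ 1 and real α > 0, ∑_{j=1}^{n-1} j^α (log(n/j))^{d-1} ~ (d-1)!·n^{α+1}/(α+1)^d as n → ∞. -/
open Finset Filter Real

open MeasureTheory intervalIntegral



lemma riemann_sum_tendsto {f : ℝ → ℝ} (hf : ContinuousOn f (Set.Icc 0 1)) :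
    Tendsto (fun n : ℕ => (∑ j ∈ Finset.range n, f (j / n)) / n) atTop
      (nhds (∫ x in (0:ℝ)..1, f x)) := by
  rw [Metric.tendsto_atTop]
  intro ε hε
  -- uniform continuity
  have hu : UniformContinuousOn f (Set.Icc 0 1) :=
    isCompact_Icc.uniformContinuousOn_of_continuous hf
  rw [Metric.uniformContinuousOn_iff] at hu
  obtain ⟨δ, hδ, hδ'⟩ := hu (ε / 2) (by linarith)
  obtain ⟨N, hN⟩ := exists_nat_gt (1 / δ)
  refine ⟨max N 1, fun n hn => ?_⟩
  have hn1 : 1 ≤ n := le_trans (le_max_right _ _) hn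
  have hnN : (N : ℝ) ≤ n := Nat.cast_le.2 (le_trans (le_max_left _ _) hn)
  have hnpos : (0:ℝ) < n := by positivity
  have hinv : 1 / (n:ℝ) < δ := by
    rw [div_lt_iff₀ hnpos]
    calc (1:ℝ) < δ * N := by rw [← div_lt_iff₀' hδ]; exact hN
    _ ≤ δ * n := by nlinarith
  -- points in [0,1]
  have hmem : ∀ j : ℕ, j ≤ n → (j : ℝ) / n ∈ Set.Icc (0:ℝ) 1 := by
    intro j hj
    constructor
    · positivity
    · rw [div_le_one hnpos]; exact_mod_cast hj
  -- integrability
  have hint : ∀ j : ℕ, j < n → IntervalIntegrable f volume ((j:ℝ)/n) ((j+1:ℕ)/n) := by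
    intro j hj
    apply ContinuousOn.intervalIntegrable
    apply hf.mono
    rw [Set.uIcc_of_le (by apply div_le_div_of_nonneg_right _ hnpos.le; push_cast; linarith)]
    intro x hx
    exact ⟨le_trans (hmem j hj.le).1 hx.1, le_trans hx.2 (hmem (j+1) hj).2⟩
  -- split integral
  have hsplit : ∫ x in (0:ℝ)..1, f x = ∑ j ∈ Finset.range n, ∫ x in ((j:ℝ)/n)..((j+1:ℕ)/n), f x := by
    have := intervalIntegral.sum_integral_adjacent_intervals (f := f) (μ := volume)
      (a := fun j : ℕ => (j:ℝ)/n) (n := n) (fun j hj => hint j hj)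
    beta_reduce at this
    rw [eq_comm, this]
    norm_num [div_self hnpos.ne']
  rw [dist_eq_norm, hsplit, Finset.sum_div, ← Finset.sum_sub_distrib]
  have hbound : ∀ j ∈ Finset.range n,
      ‖f ((j:ℝ)/n) / n - ∫ x in ((j:ℝ)/n)..((j+1:ℕ)/n), f x‖ ≤ (ε/2) / n := by
    intro j hj
    rw [Finset.mem_range] at hj
    have hconst : f ((j:ℝ)/n) / n = ∫ x in ((j:ℝ)/n)..((j+1:ℕ)/n), f ((j:ℝ)/n) := by
      rw [intervalIntegral.integral_const, smul_eq_mul]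
      push_cast
      field_simp
      ring
    rw [hconst, ← intervalIntegral.integral_sub (by simp) (hint j hj)]
    have hle : (j:ℝ)/n ≤ ((j+1:ℕ):ℝ)/n := by
      apply div_le_div_of_nonneg_right _ hnpos.le <;> push_cast <;> linarith
    have := intervalIntegral.norm_integral_le_of_norm_le_const
      (f := fun x => f ((j:ℝ)/n) - f x) (C := ε/2) (a := (j:ℝ)/n) (b := ((j+1:ℕ):ℝ)/n) ?_
    · calc ‖∫ x in ((j:ℝ)/n)..((j+1:ℕ)/n), (f ((j:ℝ)/n) - f x)‖
          ≤ (ε/2) * |((j+1:ℕ):ℝ)/n - (j:ℝ)/n| := this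
        _ = (ε/2) / n := by
            rw [abs_of_nonneg (by linarith)]
            push_cast; field_simp
            ring
    · intro x hx
      rw [Set.uIoc_of_le hle] at hx
      have hx1 : x ∈ Set.Icc (0:ℝ) 1 := by
        constructor
        · exact le_trans (hmem j hj.le).1 hx.1.le
        · exact le_trans hx.2 (hmem (j+1) hj).2
      have hd : dist ((j:ℝ)/n) x < δ := by
        rw [Real.dist_eq, abs_of_nonpos (by linarith [hx.1])]
        have : x - (j:ℝ)/n ≤ 1/n := by
          have := hx.2
          push_cast at this ⊢
          rw [add_div] at this
          linarith
        linarith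
      have := hδ' _ (hmem j hj.le) x hx1 hd
      rw [Real.dist_eq] at this
      exact this.le
  calc ‖∑ j ∈ Finset.range n, (f ((j:ℝ)/n) / n - ∫ x in ((j:ℝ)/n)..((j+1:ℕ)/n), f x)‖
      ≤ ∑ j ∈ Finset.range n, ‖f ((j:ℝ)/n) / n - ∫ x in ((j:ℝ)/n)..((j+1:ℕ)/n), f x‖ :=
        norm_sum_le _ _
    _ ≤ ∑ j ∈ Finset.range n, (ε/2) / n := Finset.sum_le_sum hbound
    _ = ε / 2 := by
        rw [Finset.sum_const, Finset.card_range, nsmul_eq_mul]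
        field_simp
    _ < ε := by linarith


lemma f_continuous {α : ℝ} (hα : 0 < α) (k : ℕ) :
    ContinuousOn (fun x : ℝ => x ^ α * (-Real.log x) ^ k) (Set.Icc 0 1) := by
  intro x hx
  rcases eq_or_lt_of_le hx.1 with h0 | h0
  · -- x = 0
    subst h0
    have hval : (0:ℝ) ^ α * (-Real.log 0) ^ k = 0 := by
      rw [Real.zero_rpow hα.ne']; ring
    rw [ContinuousWithinAt, hval]
    have htend : Tendsto (fun x : ℝ => x ^ α * (-Real.log x) ^ k) (nhdsWithin 0 (Set.Ioi 0)) (nhds 0) := by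
      rcases Nat.eq_zero_or_pos k with hk | hk
      · subst hk
        simp only [pow_zero, mul_one]
        have : ContinuousAt (fun x : ℝ => x ^ α) 0 :=
          Real.continuousAt_rpow_const 0 α (Or.inr hα.le)
        have := this.continuousWithinAt (s := Set.Ioi 0)
        rw [ContinuousWithinAt, Real.zero_rpow hα.ne'] at this
        exact this
      · have hbase : Tendsto (fun x : ℝ => Real.log x * x ^ (α / k)) (nhdsWithin 0 (Set.Ioi 0)) (nhds 0) :=
          tendsto_log_mul_rpow_nhdsGT_zero (by positivity)
        have hpow : Tendsto (fun y : ℝ => (-y) ^ k) (nhds 0) (nhds 0) := by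
          have h : ContinuousAt (fun y : ℝ => (-y) ^ k) 0 := by fun_prop
          simpa [ContinuousAt, zero_pow hk.ne'] using h
        have := hpow.comp hbase
        apply this.congr'
        filter_upwards [self_mem_nhdsWithin] with x hx
        simp only [Function.comp_apply]
        rw [neg_mul_eq_neg_mul, mul_pow, ← Real.rpow_natCast (x ^ (α/k)) k,
          ← Real.rpow_mul (le_of_lt hx), div_mul_cancel₀ _ (by positivity : (k:ℝ) ≠ 0)]
        ring
    -- extend from Ioi 0 to Icc 0 1
    have : Set.Icc (0:ℝ) 1 ⊆ Set.Ioi 0 ∪ {0} := by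
      intro y hy
      rcases eq_or_lt_of_le hy.1 with h | h
      · exact Or.inr (by simp [← h])
      · exact Or.inl h
    apply Tendsto.mono_left _ (nhdsWithin_mono 0 this)
    rw [nhdsWithin_union]
    apply Tendsto.sup htend
    · simp only [nhdsWithin_singleton, tendsto_pure_left]
      intro s hs
      have hval' : (0:ℝ) ^ α * (-Real.log 0) ^ k = 0 := by
        rw [Real.zero_rpow hα.ne']; ring
      rw [hval']
      exact mem_of_mem_nhds hs
  · -- x > 0
    apply ContinuousAt.continuousWithinAt
    exact (Real.continuousAt_rpow_const x α (Or.inl h0.ne')).mul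
      (((Real.continuousAt_log h0.ne').neg).pow k)


lemma f_integral {α : ℝ} (hα : 0 < α) (k : ℕ) :
    ∫ x in (0:ℝ)..1, x ^ α * (-Real.log x) ^ k = (k.factorial : ℝ) / (α + 1) ^ (k + 1) := by
  rw [intervalIntegral.integral_of_le zero_le_one,
    MeasureTheory.integral_Ioc_eq_integral_Ioo]
  have himg : (fun t : ℝ => Real.exp (-t)) '' Set.Ioi 0 = Set.Ioo 0 1 := by
    ext y
    constructor
    · rintro ⟨t, ht, rfl⟩
      exact ⟨Real.exp_pos _, by
        rw [Real.exp_lt_one_iff]; simpa using ht⟩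
    · rintro ⟨hy0, hy1⟩
      exact ⟨-Real.log y, by simpa using Real.log_neg hy0 hy1, by
        simp [Real.exp_log hy0]⟩
  have hchg := MeasureTheory.integral_image_eq_integral_abs_deriv_smul
    (s := Set.Ioi (0:ℝ)) measurableSet_Ioi
    (f := fun t => Real.exp (-t)) (f' := fun t => -Real.exp (-t))
    (fun t _ => by
      simpa [Function.comp_def] using ((Real.hasDerivAt_exp (-t)).comp t ((hasDerivAt_id t).neg)).hasDerivWithinAt)
    (fun a _ b _ hab => by
      have := Real.exp_injective hab; linarith)
    (fun x : ℝ => x ^ α * (-Real.log x) ^ k)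
  rw [himg] at hchg
  rw [hchg]
  have : ∀ t ∈ Set.Ioi (0:ℝ),
      |(-Real.exp (-t))| • (Real.exp (-t) ^ α * (-Real.log (Real.exp (-t))) ^ k)
        = t ^ ((k:ℝ) + 1 - 1) * Real.exp (-((α + 1) * t)) := by
    intro t ht
    rw [abs_neg, abs_of_pos (Real.exp_pos _), smul_eq_mul, Real.log_exp, neg_neg,
      ← Real.exp_one_rpow (-t), ← Real.rpow_natCast _ k, ← Real.rpow_mul (by positivity),
      Real.exp_one_rpow]
    rw [Real.exp_one_rpow, add_sub_cancel_right, ← mul_assoc, ← Real.exp_add,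
      show -t + -t * α = -((α + 1) * t) by ring, mul_comm]
  rw [MeasureTheory.setIntegral_congr_fun measurableSet_Ioi this,
    integral_rpow_mul_exp_neg_mul_Ioi (by positivity) (by linarith)]
  rw [← Real.Gamma_nat_eq_factorial k]
  rw [show ((k:ℝ) + 1) = ((k + 1 : ℕ) : ℝ) by push_cast; ring, Real.rpow_natCast,
    one_div, inv_pow, inv_mul_eq_div]


/-- Asymptotic transfer sum for quad trees: for fixed integer `d ≥ 1` and real
`α > 0`, `∑_{j=1}^{n-1} j^α (log(n/j))^{d-1} ~ (d-1)!·n^{α+1}/(α+1)^d` as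
`n → ∞`. -/
theorem transfer_sum_asymptotic (d : ℕ) (hd : 1 ≤ d) (α : ℝ) (hα : 0 < α) :
    Tendsto
      (fun n : ℕ =>
        (∑ j ∈ Finset.Icc 1 (n - 1),
            (j : ℝ) ^ α * Real.log ((n : ℝ) / (j : ℝ)) ^ (d - 1)) /
          (n : ℝ) ^ (α + 1))
      atTop (nhds ((d - 1).factorial / (α + 1) ^ d)) := by
  obtain ⟨k, rfl⟩ : ∃ k, d = k + 1 := ⟨d - 1, by omega⟩
  simp only [Nat.add_sub_cancel]
  have hlim := riemann_sum_tendsto (f_continuous hα k)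
  rw [f_integral hα k] at hlim
  apply hlim.congr'
  filter_upwards [eventually_ge_atTop 1] with n hn1
  have hnpos : (0:ℝ) < n := by exact_mod_cast hn1
  -- split off the j = 0 term
  have h0 : Finset.range n = Finset.Ico 0 n := by rw [Finset.range_eq_Ico]
  rw [h0, Finset.sum_eq_sum_Ico_succ_bot (by omega)]
  have hz : ((0:ℕ):ℝ) / n = 0 := by simp
  rw [hz]
  have hf0 : (0:ℝ) ^ α * (-Real.log 0) ^ k = 0 := by
    rw [Real.zero_rpow hα.ne']; ring
  rw [hf0, zero_add]
  have hIco : Finset.Ico (0+1) n = Finset.Icc 1 (n - 1) := by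
    rw [zero_add, ← Finset.Ico_add_one_right_eq_Icc]; congr 1; omega
  rw [hIco]
  rw [Finset.sum_div, Finset.sum_div]
  apply Finset.sum_congr rfl
  intro j hj
  rw [Finset.mem_Icc] at hj
  have hjpos : (0:ℝ) < j := by exact_mod_cast hj.1
  have h1 : ((j:ℝ) / n) ^ α = (j:ℝ) ^ α / (n:ℝ) ^ α :=
    Real.div_rpow (le_of_lt hjpos) (le_of_lt hnpos) α
  have h2 : -Real.log ((j:ℝ) / n) = Real.log ((n:ℝ) / j) := by
    rw [← Real.log_inv, inv_div]
  rw [h1, h2, Real.rpow_add hnpos, Real.rpow_one]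
  field_simp
end
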